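/- arXiv:2305.17143 — 2 statements merged into one kernel-verified Lean document; each statement's English description precedes it below -/
import Mathlib

section
/- The least eigenvalue of the complement of B_1(n_1,n_2;κ) is the smallest root λ of the polynomial g(λ) = λ^4 + (2κ − n_1 n_2 − 1)λ^2 + κ^2 − (n_1+n_2)κ + n_1 n_2. -/
open Classical in
/-- The adjacency matrix of a simple graph, with real entries. -/
noncomputable def adjMat {V : Type*} [Fintype V] (G : SimpleGraph V) : Matrix V V ℝ :=
  Matrix.of fun u v => if G.Adj u v then 1 else 0

/-- The least eigenvalue of a real matrix. -/
noncomputable def minEig {V : Type*} [Fintype V] (A : Matrix V V ℝ) : ℝ :=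
  sInf {μ : ℝ | ∃ x : V → ℝ, x ≠ 0 ∧ A.mulVec x = μ • x}

/-- `B1 n1 n2 κ` is the graph obtained from disjoint complete graphs `K_{n1}` and
`K_{n2}` by adding `κ` edges forming a matching between them (the `i`-th vertex of the
first clique is matched to the `i`-th vertex of the second, for `i < κ`). -/
def B1 (n1 n2 κ : ℕ) : SimpleGraph (Fin n1 ⊕ Fin n2) where
  Adj u v :=
    Sum.elim
      (fun a => Sum.elim (fun b : Fin n1 => a ≠ b) (fun b : Fin n2 => (a : ℕ) = (b : ℕ) ∧ (a : ℕ) < κ) v)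
      (fun a => Sum.elim (fun b : Fin n1 => (b : ℕ) = (a : ℕ) ∧ (b : ℕ) < κ) (fun b : Fin n2 => a ≠ b) v) u
  symm := ⟨by
    rintro (a | a) (b | b) h
    · exact h.symm
    · exact h
    · exact h
    · exact h.symm⟩
  loopless := ⟨by rintro (a | a) h <;> exact h rfl⟩

/-! The complement of `B1 n1 n2 κ` is `K_{n1,n2}` minus a `κ`-matching, so its adjacency matrix is
`A = [0 M; Mᵀ 0]` with `M = J - P`. The sums of an eigenvector of `A` over the four classes (matched
and unmatched vertices on each side) satisfy a `4 × 4` quotient system with characteristic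
polynomial `g`. Hence `g(μ) x` has vanishing class sums, on such vectors `A` acts as the matching
alone, and every eigenvalue satisfies `μ (μ² - 1) g(μ) = 0`.

Conversely `g(λ) = h(λ²)` with `h(t) = t² - (n1 n2 + 1 - 2κ) t + (n1 - κ)(n2 - κ)`. The largest
root `t` of `h` is an eigenvalue of `MᵀM` with an eigenvector constant on the classes, and lifting
it gives the eigenvalue `-√t` of `A`, which is therefore the least one. -/

open Matrix Finset

noncomputable def largerRoot (p q : ℝ) : ℝ := (p + √(p ^ 2 - 4 * q)) / 2

section Quadratic

variable {p q s : ℝ}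

lemma le_largerRoot (hs : s ^ 2 - p * s + q ≤ 0) : s ≤ largerRoot p q := by
  have : 2 * s - p ≤ √(p ^ 2 - 4 * q) :=
    (le_abs_self _).trans (Real.abs_le_sqrt (by linarith))
  unfold largerRoot
  linarith

lemma largerRoot_isRoot (hs : s ^ 2 - p * s + q ≤ 0) :
    largerRoot p q ^ 2 - p * largerRoot p q + q = 0 := by
  have hD : 0 ≤ p ^ 2 - 4 * q := by nlinarith [sq_nonneg (2 * s - p)]
  unfold largerRoot
  linear_combination Real.sq_sqrt hD / 4

lemma largerRoot_zero (hp : 0 ≤ p) : largerRoot p 0 = p := by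
  simp [largerRoot, Real.sqrt_sq hp]

end Quadratic

lemma exists_mulVec_fromBlocks_eq_neg_smul {m n : Type*} [Fintype m] [Fintype n]
    (M : Matrix m n ℝ) {σ : ℝ} {z : n → ℝ} (hz : z ≠ 0) (h : Mᵀ *ᵥ (M *ᵥ z) = σ ^ 2 • z) :
    ∃ x ≠ 0, fromBlocks 0 M Mᵀ 0 *ᵥ x = (-σ) • x := by
  have hMz : σ = 0 → M *ᵥ z = 0 := by
    rintro rfl
    rw [← dotProduct_self_eq_zero, dotProduct_mulVec, ← mulVec_transpose, h]
    simp
  refine ⟨Sum.elim (-σ⁻¹ • (M *ᵥ z)) z, fun h0 => hz ?_, ?_⟩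
  · ext j
    simpa using congrFun h0 (.inr j)
  · rw [fromBlocks_mulVec]
    by_cases hσ : σ = 0
    · ext (i | j) <;> simp [hσ, hMz hσ]
    · have hσσ : σ⁻¹ * σ ^ 2 = σ := by field_simp
      ext (i | j) <;> simp [hσ, mulVec_neg, mulVec_smul, h, smul_smul, hσσ]

section StepVectors

variable {n κ : ℕ}

def stepVec (κ : ℕ) (c d : ℝ) : Fin n → ℝ := fun i => if (i : ℕ) < κ then c else d

def lowSum (κ : ℕ) (z : Fin n → ℝ) : ℝ := ∑ j ∈ univ.filter (fun j : Fin n => (j : ℕ) < κ), z j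

def highSum (κ : ℕ) (z : Fin n → ℝ) : ℝ := ∑ j ∈ univ.filter (fun j : Fin n => ¬ (j : ℕ) < κ), z j

lemma sum_eq_lowSum_add_highSum (z : Fin n → ℝ) : ∑ j, z j = lowSum κ z + highSum κ z :=
  (sum_filter_add_sum_filter_not _ _ _).symm

lemma lowSum_smul (μ : ℝ) (z : Fin n → ℝ) : lowSum κ (μ • z) = μ * lowSum κ z := by
  simp only [lowSum, Pi.smul_apply, smul_eq_mul, mul_sum]

lemma highSum_smul (μ : ℝ) (z : Fin n → ℝ) : highSum κ (μ • z) = μ * highSum κ z := by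
  simp only [highSum, Pi.smul_apply, smul_eq_mul, mul_sum]

lemma stepVec_dotProduct (c d : ℝ) (z : Fin n → ℝ) :
    stepVec κ c d ⬝ᵥ z = c * lowSum κ z + d * highSum κ z := by
  simp only [dotProduct, stepVec, ite_mul, sum_ite, lowSum, highSum, mul_sum]

lemma smul_stepVec (t c d : ℝ) : t • stepVec (n := n) κ c d = stepVec κ (t * c) (t * d) := by
  ext i
  simp only [stepVec, Pi.smul_apply, smul_eq_mul, mul_ite]

lemma sum_stepVec (h : κ ≤ n) (c d : ℝ) : ∑ j : Fin n, stepVec κ c d j = κ * c + (n - κ) * d := by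
  have hlow : #{j : Fin n | (j : ℕ) < κ} = κ := by simp [Fin.card_filter_val_lt, h]
  have hhigh : #{j : Fin n | ¬ (j : ℕ) < κ} = n - κ := by
    rw [filter_not, card_sdiff_of_subset (filter_subset _ _), hlow, card_univ, Fintype.card_fin]
  simp only [stepVec, sum_ite, sum_const, hlow, hhigh, nsmul_eq_mul]
  push_cast [h]
  ring

end StepVectors

noncomputable def onesSubMatching (n1 n2 κ : ℕ) : Matrix (Fin n1) (Fin n2) ℝ :=
  of fun i j => if (i : ℕ) = j ∧ (i : ℕ) < κ then 0 else 1

variable {n1 n2 κ : ℕ}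

lemma onesSubMatching_transpose : (onesSubMatching n1 n2 κ)ᵀ = onesSubMatching n2 n1 κ := by
  ext j i
  simp only [onesSubMatching, transpose_apply, of_apply]
  grind

lemma onesSubMatching_one : onesSubMatching 1 1 1 = 0 := by
  ext i j
  simp [onesSubMatching, Fin.val_eq_zero]

lemma adjMat_compl_B1 :
    adjMat (B1 n1 n2 κ)ᶜ = fromBlocks 0 (onesSubMatching n1 n2 κ) (onesSubMatching n1 n2 κ)ᵀ 0 := by
  ext (i | i) (j | j) <;>
    simp [adjMat, B1, onesSubMatching, Functor.map, Sum.bind, Fin.val_eq_val] <;> grind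

lemma onesSubMatching_mulVec_of_lt (h : κ ≤ n2) (z : Fin n2 → ℝ) (i : Fin n1) (hi : (i : ℕ) < κ) :
    (onesSubMatching n1 n2 κ *ᵥ z) i = ∑ j, z j - z ⟨i, hi.trans_le h⟩ := by
  have hM : ∀ j, onesSubMatching n1 n2 κ i j = 1 - if j = ⟨i, hi.trans_le h⟩ then 1 else 0 := by
    intro j
    simp only [onesSubMatching, of_apply, Fin.ext_iff, hi, and_true, eq_comm (a := (j : ℕ))]
    split_ifs <;> norm_num
  simp [mulVec, dotProduct, hM, sub_mul, sum_sub_distrib]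

lemma onesSubMatching_mulVec_of_not_lt (z : Fin n2 → ℝ) (i : Fin n1) (hi : ¬ (i : ℕ) < κ) :
    (onesSubMatching n1 n2 κ *ᵥ z) i = ∑ j, z j := by
  simp [mulVec, dotProduct, onesSubMatching, hi]

lemma onesSubMatching_mulVec_stepVec (h : κ ≤ n2) (c d : ℝ) :
    onesSubMatching n1 n2 κ *ᵥ stepVec κ c d =
      stepVec κ ((κ - 1) * c + (n2 - κ) * d) (κ * c + (n2 - κ) * d) := by
  ext i
  by_cases hi : (i : ℕ) < κ
  · rw [onesSubMatching_mulVec_of_lt h _ i hi, sum_stepVec h]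
    simp only [stepVec, hi, if_true]
    ring
  · rw [onesSubMatching_mulVec_of_not_lt _ i hi, sum_stepVec h]
    simp only [stepVec, hi, if_false]

lemma lowSum_onesSubMatching_mulVec (h : κ ≤ n1) (z : Fin n2 → ℝ) :
    lowSum κ (onesSubMatching n1 n2 κ *ᵥ z) = (κ - 1) * lowSum κ z + κ * highSum κ z := by
  have hlow : ∀ w : Fin n1 → ℝ, lowSum κ w = stepVec κ 1 0 ⬝ᵥ w := by
    intro w
    rw [stepVec_dotProduct]
    ring
  rw [hlow, dotProduct_mulVec, ← mulVec_transpose, onesSubMatching_transpose,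
    onesSubMatching_mulVec_stepVec h, stepVec_dotProduct]
  ring

lemma highSum_onesSubMatching_mulVec (h : κ ≤ n1) (z : Fin n2 → ℝ) :
    highSum κ (onesSubMatching n1 n2 κ *ᵥ z) = (n1 - κ) * (lowSum κ z + highSum κ z) := by
  have hhigh : ∀ w : Fin n1 → ℝ, highSum κ w = stepVec κ 0 1 ⬝ᵥ w := by
    intro w
    rw [stepVec_dotProduct]
    ring
  rw [hhigh, dotProduct_mulVec, ← mulVec_transpose, onesSubMatching_transpose,
    onesSubMatching_mulVec_stepVec h, stepVec_dotProduct]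
  ring

noncomputable def quarticB1 (n1 n2 κ : ℕ) (μ : ℝ) : ℝ :=
  μ ^ 4 + (2 * (κ : ℝ) - (n1 : ℝ) * (n2 : ℝ) - 1) * μ ^ 2
    + (κ : ℝ) ^ 2 - ((n1 : ℝ) + (n2 : ℝ)) * (κ : ℝ) + (n1 : ℝ) * (n2 : ℝ)

noncomputable def quadB1 (n1 n2 κ : ℕ) (t : ℝ) : ℝ :=
  t ^ 2 - ((n1 : ℝ) * n2 + 1 - 2 * κ) * t + ((n1 : ℝ) - κ) * ((n2 : ℝ) - κ)

noncomputable def topRootB1 (n1 n2 κ : ℕ) : ℝ :=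
  largerRoot ((n1 : ℝ) * n2 + 1 - 2 * κ) (((n1 : ℝ) - κ) * ((n2 : ℝ) - κ))

lemma quarticB1_eq_quadB1 (μ : ℝ) : quarticB1 n1 n2 κ μ = quadB1 n1 n2 κ (μ ^ 2) := by
  unfold quarticB1 quadB1
  ring

lemma quarticB1_comm : quarticB1 n1 n2 κ = quarticB1 n2 n1 κ := by
  ext μ
  unfold quarticB1
  ring

lemma quarticB1_mul_add_eq_zero {μ a b c d : ℝ}
    (ha : μ * a = (κ - 1) * c + κ * d) (hb : μ * b = (n1 - κ) * (c + d))
    (hc : μ * c = (κ - 1) * a + κ * b) (hd : μ * d = (n2 - κ) * (a + b)) :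
    quarticB1 n1 n2 κ μ * (a + b) = 0 := by
  -- `(a, b)` is an eigenvector, for `μ²`, of the quotient of `M Mᵀ`, whose characteristic
  -- polynomial is `h`.
  have ha' : μ ^ 2 * a = ((κ - 1) ^ 2 + κ * (n2 - κ)) * a + κ * (n2 - 1) * b := by
    linear_combination μ * ha + (κ - 1) * hc + κ * hd
  have hb' : μ ^ 2 * b = (n1 - κ) * (n2 - 1) * a + (n1 - κ) * n2 * b := by
    linear_combination μ * hb + (n1 - κ) * (hc + hd)
  unfold quarticB1
  linear_combination (μ ^ 2 - (n1 - κ) * n2 + (n1 - κ) * (n2 - 1)) * ha'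
    + (κ * (n2 - 1) + μ ^ 2 - ((κ - 1) ^ 2 + κ * (n2 - κ))) * hb'

lemma mul_sub_one_mul_add_one_mul_eq_zero (h1 : κ ≤ n1) (h2 : κ ≤ n2) {μ s : ℝ}
    {y : Fin n1 → ℝ} {z : Fin n2 → ℝ} (hy : onesSubMatching n1 n2 κ *ᵥ z = μ • y)
    (hz : onesSubMatching n2 n1 κ *ᵥ y = μ • z) (hsy : s * ∑ i, y i = 0)
    (hsz : s * ∑ j, z j = 0) (i : Fin n1) :
    μ * (μ - 1) * (μ + 1) * s * y i = 0 := by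
  have ey := congrFun hy i
  by_cases hi : (i : ℕ) < κ
  · have ez := congrFun hz ⟨i, hi.trans_le h2⟩
    rw [onesSubMatching_mulVec_of_lt h2 z i hi] at ey
    rw [onesSubMatching_mulVec_of_lt h1 y ⟨i, hi.trans_le h2⟩ hi] at ez
    simp only [Pi.smul_apply, smul_eq_mul, Fin.eta] at ey ez
    linear_combination μ * s * (ez - μ * ey) + μ ^ 2 * hsz - μ * hsy
  · rw [onesSubMatching_mulVec_of_not_lt z i hi] at ey
    simp only [Pi.smul_apply, smul_eq_mul] at ey
    linear_combination (μ ^ 2 - 1) * (hsz - s * ey)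

lemma eigenvalue_compl_B1_mul_quarticB1_eq_zero (h1 : n2 ≤ n1) (h2 : κ ≤ n2) {μ : ℝ}
    {x : Fin n1 ⊕ Fin n2 → ℝ} (hx : x ≠ 0) (h : adjMat (B1 n1 n2 κ)ᶜ *ᵥ x = μ • x) :
    μ * (μ - 1) * (μ + 1) * quarticB1 n1 n2 κ μ = 0 := by
  have h1' : κ ≤ n1 := h2.trans h1
  rw [adjMat_compl_B1, onesSubMatching_transpose, fromBlocks_mulVec] at h
  set y := x ∘ Sum.inl
  set z := x ∘ Sum.inr
  have hy : onesSubMatching n1 n2 κ *ᵥ z = μ • y := by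
    ext i
    simpa [y] using congrFun h (.inl i)
  have hz : onesSubMatching n2 n1 κ *ᵥ y = μ • z := by
    ext j
    simpa [z] using congrFun h (.inr j)
  have ha := lowSum_onesSubMatching_mulVec h1' z
  have hb := highSum_onesSubMatching_mulVec h1' z
  have hc := lowSum_onesSubMatching_mulVec h2 y
  have hd := highSum_onesSubMatching_mulVec h2 y
  rw [hy, lowSum_smul] at ha
  rw [hy, highSum_smul] at hb
  rw [hz, lowSum_smul] at hc
  rw [hz, highSum_smul] at hd
  have hsy : quarticB1 n1 n2 κ μ * ∑ i, y i = 0 := by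
    rw [sum_eq_lowSum_add_highSum (κ := κ)]
    exact quarticB1_mul_add_eq_zero ha hb hc hd
  have hsz : quarticB1 n1 n2 κ μ * ∑ j, z j = 0 := by
    rw [quarticB1_comm, sum_eq_lowSum_add_highSum (κ := κ)]
    exact quarticB1_mul_add_eq_zero hc hd ha hb
  obtain ⟨v | v, hv⟩ := Function.ne_iff.1 hx
  · exact (mul_eq_zero.1 (mul_sub_one_mul_add_one_mul_eq_zero h1' h2 hy hz hsy hsz v)).resolve_right
      hv
  · exact (mul_eq_zero.1 (mul_sub_one_mul_add_one_mul_eq_zero h2 h1' hz hy hsz hsy v)).resolve_right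
      hv

lemma le_topRootB1 {s : ℝ} (hs : quadB1 n1 n2 κ s ≤ 0) : s ≤ topRootB1 n1 n2 κ :=
  le_largerRoot hs

-- `n1 (n2 - κ)` is a diagonal entry of the `2 × 2` quotient of `MᵀM`, so `h` there is minus the
-- product of the off-diagonal entries.
lemma quadB1_mul_sub_nonpos (h2 : κ ≤ n2) : quadB1 n1 n2 κ (n1 * (n2 - κ)) ≤ 0 := by
  have hval : quadB1 n1 n2 κ (n1 * (n2 - κ)) = -(κ * ((n2 : ℝ) - κ) * ((n1 : ℝ) - 1) ^ 2) := by
    unfold quadB1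
    ring
  have : (0 : ℝ) ≤ n2 - κ := sub_nonneg.2 (by exact_mod_cast h2)
  rw [hval, neg_nonpos]
  positivity

lemma quadB1_topRootB1 (h2 : κ ≤ n2) : quadB1 n1 n2 κ (topRootB1 n1 n2 κ) = 0 :=
  largerRoot_isRoot (quadB1_mul_sub_nonpos h2)

lemma topRootB1_nonneg (h2 : κ ≤ n2) : 0 ≤ topRootB1 n1 n2 κ := by
  have : (0 : ℝ) ≤ n2 - κ := sub_nonneg.2 (by exact_mod_cast h2)
  exact (mul_nonneg (Nat.cast_nonneg n1) this).trans (le_topRootB1 (quadB1_mul_sub_nonpos h2))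

lemma one_le_topRootB1 (h2 : κ ≤ n2) (hn1 : 2 ≤ n1) : 1 ≤ topRootB1 n1 n2 κ := by
  have h2' : (κ : ℝ) ≤ n2 := by exact_mod_cast h2
  have hn1' : (2 : ℝ) ≤ n1 := by exact_mod_cast hn1
  apply le_topRootB1
  unfold quadB1
  nlinarith [Nat.cast_nonneg (α := ℝ) κ]

lemma quarticB1_neg_sqrt_topRootB1 (h2 : κ ≤ n2) :
    quarticB1 n1 n2 κ (-√(topRootB1 n1 n2 κ)) = 0 := by
  rw [quarticB1_eq_quadB1, neg_sq, Real.sq_sqrt (topRootB1_nonneg h2)]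
  exact quadB1_topRootB1 h2

lemma neg_sqrt_topRootB1_le_of_quarticB1_eq_zero {μ : ℝ} (hμ : quarticB1 n1 n2 κ μ = 0) :
    -√(topRootB1 n1 n2 κ) ≤ μ := by
  rw [quarticB1_eq_quadB1] at hμ
  exact Real.neg_sqrt_le_of_sq_le (le_topRootB1 hμ.le)

lemma exists_eigenvector_transpose_mul_onesSubMatching (h1 : n2 ≤ n1) (h2 : κ ≤ n2)
    (h3 : 1 ≤ κ) : ∃ z ≠ 0, (onesSubMatching n1 n2 κ)ᵀ *ᵥ (onesSubMatching n1 n2 κ *ᵥ z)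
      = topRootB1 n1 n2 κ • z := by
  have hMM : ∀ c d : ℝ, (onesSubMatching n1 n2 κ)ᵀ *ᵥ (onesSubMatching n1 n2 κ *ᵥ stepVec κ c d)
      = stepVec κ ((κ - 1) * ((κ - 1) * c + (n2 - κ) * d) + (n1 - κ) * (κ * c + (n2 - κ) * d))
          (κ * ((κ - 1) * c + (n2 - κ) * d) + (n1 - κ) * (κ * c + (n2 - κ) * d)) := by
    intro c d
    rw [onesSubMatching_transpose, onesSubMatching_mulVec_stepVec h2,
      onesSubMatching_mulVec_stepVec (h2.trans h1)]
  set t := topRootB1 n1 n2 κ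
  rcases h2.lt_or_eq with hlt | rfl
  · have hn1 : (2 : ℝ) ≤ n1 := by exact_mod_cast (show 2 ≤ n1 by omega)
    have hκ : (1 : ℝ) ≤ κ := by exact_mod_cast h3
    -- an eigenvector of the `2 × 2` quotient of `MᵀM` for its eigenvalue `t`
    refine ⟨stepVec κ (t - n1 * (n2 - κ)) (κ * (n1 - 1)), ?_, ?_⟩
    · refine Function.ne_iff.2 ⟨⟨κ, hlt⟩, ?_⟩
      simp only [stepVec, lt_irrefl, if_false, Pi.zero_apply]
      exact (mul_pos (by linarith) (by linarith)).ne'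
    · rw [hMM, smul_stepVec]
      congr 1
      · have hroot := quadB1_topRootB1 (n1 := n1) h2
        unfold quadB1 at hroot
        linear_combination -hroot
      · ring
  · -- every vertex of the second side is matched, so only the first value of a step vector counts
    have ht : t = κ * n1 + 1 - 2 * κ := by
      have hq : ((n1 : ℝ) - κ) * ((κ : ℝ) - κ) = 0 := by ring
      have hp : (0 : ℝ) ≤ n1 * κ + 1 - 2 * κ := by
        have : (κ : ℝ) ≤ n1 := by exact_mod_cast h1
        nlinarith [sq_nonneg ((κ : ℝ) - 1), Nat.cast_nonneg (α := ℝ) κ]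
      simp only [t, topRootB1, hq, largerRoot_zero hp]
      ring
    refine ⟨stepVec κ 1 0, Function.ne_iff.2 ⟨⟨0, h3⟩, ?_⟩, ?_⟩
    · simp [stepVec, Nat.one_le_iff_ne_zero.mp h3]
    · ext j
      simp only [hMM, smul_stepVec, stepVec, j.isLt, if_true, ht]
      ring

lemma neg_sqrt_topRootB1_le_eigenvalue (h1 : n2 ≤ n1) (h2 : κ ≤ n2) (h3 : 1 ≤ κ) {μ : ℝ}
    {x : Fin n1 ⊕ Fin n2 → ℝ} (hx : x ≠ 0) (h : adjMat (B1 n1 n2 κ)ᶜ *ᵥ x = μ • x) :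
    -√(topRootB1 n1 n2 κ) ≤ μ := by
  have hsqrt := Real.sqrt_nonneg (topRootB1 n1 n2 κ)
  have key := eigenvalue_compl_B1_mul_quarticB1_eq_zero h1 h2 hx h
  simp only [mul_eq_zero, sub_eq_zero, add_eq_zero_iff_eq_neg] at key
  obtain ((rfl | rfl) | rfl) | hg := key
  · linarith
  · linarith
  · rcases (show n1 = 1 ∨ 2 ≤ n1 by omega) with rfl | hn1
    · -- the complement of `B1 1 1 1` has no edges
      obtain rfl : n2 = 1 := by omega
      obtain rfl : κ = 1 := by omega
      rw [adjMat_compl_B1, onesSubMatching_one] at h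
      simp [hx] at h
    · exact Real.neg_sqrt_le_of_sq_le (by simpa using one_le_topRootB1 h2 hn1)
  · exact neg_sqrt_topRootB1_le_of_quarticB1_eq_zero hg

lemma isLeast_eigenvalues_compl_B1 (h1 : n2 ≤ n1) (h2 : κ ≤ n2) (h3 : 1 ≤ κ) :
    IsLeast {μ : ℝ | ∃ x : Fin n1 ⊕ Fin n2 → ℝ, x ≠ 0 ∧ adjMat (B1 n1 n2 κ)ᶜ *ᵥ x = μ • x}
      (-√(topRootB1 n1 n2 κ)) := by
  refine ⟨?_, fun μ ⟨x, hx, h⟩ => neg_sqrt_topRootB1_le_eigenvalue h1 h2 h3 hx h⟩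
  obtain ⟨z, hz, hMM⟩ := exists_eigenvector_transpose_mul_onesSubMatching h1 h2 h3
  rw [← Real.sq_sqrt (topRootB1_nonneg h2)] at hMM
  rw [Set.mem_ofPred_eq, adjMat_compl_B1]
  exact exists_mulVec_fromBlocks_eq_neg_smul _ hz hMM

/-- The least eigenvalue of the complement of `B1(n1, n2; κ)` is the smallest root of
the polynomial `g(λ) = λ⁴ + (2κ − n1·n2 − 1)λ² + κ² − (n1+n2)κ + n1·n2`. -/
theorem minEig_compl_B1_root (n1 n2 κ : ℕ) (h1 : n2 ≤ n1) (h2 : κ ≤ n2) (h3 : 1 ≤ κ) :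
    (minEig (adjMat ((B1 n1 n2 κ)ᶜ)) ^ 4
        + (2 * (κ : ℝ) - (n1 : ℝ) * (n2 : ℝ) - 1) * minEig (adjMat ((B1 n1 n2 κ)ᶜ)) ^ 2
        + (κ : ℝ) ^ 2 - ((n1 : ℝ) + (n2 : ℝ)) * (κ : ℝ) + (n1 : ℝ) * (n2 : ℝ) = 0) ∧
    (∀ μ : ℝ,
      μ ^ 4 + (2 * (κ : ℝ) - (n1 : ℝ) * (n2 : ℝ) - 1) * μ ^ 2
        + (κ : ℝ) ^ 2 - ((n1 : ℝ) + (n2 : ℝ)) * (κ : ℝ) + (n1 : ℝ) * (n2 : ℝ) = 0 →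
      minEig (adjMat ((B1 n1 n2 κ)ᶜ)) ≤ μ) := by
  have hmin : minEig (adjMat (B1 n1 n2 κ)ᶜ) = -√(topRootB1 n1 n2 κ) :=
    (isLeast_eigenvalues_compl_B1 h1 h2 h3).csInf_eq
  rw [hmin]
  exact ⟨quarticB1_neg_sqrt_topRootB1 h2,
    fun μ hμ => neg_sqrt_topRootB1_le_of_quarticB1_eq_zero hμ⟩
end

section
/- Let n_1 ≥ κ > n_2 ≥ 1 and let B_2(n_1,n_2;κ) be obtained from disjoint K_{n_1} and K_{n_2} by adding an n_2-matching M_1 between K_{n_2} and n_2 vertices of K_{n_1}, and joining every vertex of K_{n_2} to a fixed set of κ−n_2 further vertices of K_{n_1} not covered by M_1. Then the least eigenvalue of the complement of B_2(n_1,n_2;κ) equals −√((n_2−1)^2 + (n_1−κ)n_2). -/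
/-- `B2 n1 n2 κ` (for `n1 ≥ κ > n2`) is obtained from disjoint complete graphs `K_{n1}`
and `K_{n2}` by adding an `n2`-matching (the `i`-th vertex of the first clique is matched
to the `i`-th vertex of the second for `i < n2`) and joining every vertex of `K_{n2}` to
the `κ − n2` further vertices of `K_{n1}` with indices `n2 ≤ i < κ`, none of which is
covered by the matching. -/
def B2 (n1 n2 κ : ℕ) : SimpleGraph (Fin n1 ⊕ Fin n2) where
  Adj u v :=
    Sum.elim
      (fun a => Sum.elim (fun b : Fin n1 => a ≠ b)
        (fun b : Fin n2 => ((a : ℕ) = (b : ℕ) ∧ (a : ℕ) < n2) ∨ (n2 ≤ (a : ℕ) ∧ (a : ℕ) < κ)) v)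
      (fun a : Fin n2 => Sum.elim
        (fun b : Fin n1 => ((b : ℕ) = (a : ℕ) ∧ (b : ℕ) < n2) ∨ (n2 ≤ (b : ℕ) ∧ (b : ℕ) < κ))
        (fun b : Fin n2 => a ≠ b) v) u
  symm := by
    constructor
    rintro (a | a) (b | b) h
    · exact h.symm
    · exact h
    · exact h
    · exact h.symm
  loopless := by constructor; rintro (a | a) h <;> exact h rfl

/-!
The complement of `B2 n1 n2 κ` is bipartite between the two cliques, so its adjacency matrix
is `[[0, N], [Nᵀ, 0]]` for the biadjacency matrix `N`. For such a matrix the least eigenvalue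
is `-√T`, where `T` is the maximum of the Rayleigh quotient `‖N v‖² / ‖v‖²`. The rows of `N`
are `𝟙 - e_b` for the `n2` matched vertices, `0` for the `κ - n2` vertices joined to all of
`K_{n2}`, and `𝟙` for the remaining `n1 - κ` vertices. Hence, with `S = ∑ v`,
`‖N v‖² = ∑_b (S - v_b)² + (n1 - κ) S²`, which Cauchy–Schwarz bounds by
`((n2 - 1)² + (n1 - κ) n2) ‖v‖²`, with equality at `v = 𝟙`.
-/

open Matrix Finset

theorem Fin.card_filter_le_val {n k : ℕ} (hk : k ≤ n) : #{a : Fin n | k ≤ (a : ℕ)} = n - k := by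
  have := card_filter_add_card_filter_not (s := univ) (fun a : Fin n => (a : ℕ) < k)
  simp only [not_lt, card_univ, Fintype.card_fin, Fin.card_filter_val_lt, min_eq_right hk] at this
  omega

theorem Fin.sum_eq_sum_castLE_add_sum_filter_le {M : Type*} [AddCommMonoid M] {n m k : ℕ}
    (hmn : m ≤ n) (hmk : m ≤ k) (f : Fin n → M)
    (hf : ∀ a : Fin n, m ≤ (a : ℕ) → (a : ℕ) < k → f a = 0) :
    ∑ a, f a = ∑ b : Fin m, f (b.castLE hmn) + ∑ a : Fin n with k ≤ a.val, f a := by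
  rw [← sum_filter_add_sum_filter_not univ (fun a : Fin n => (a : ℕ) < m)]
  congr 1
  · have hfilter :
        ({a : Fin n | (a : ℕ) < m} : Finset (Fin n)) = univ.map (Fin.castLEEmb hmn) := by
      ext a
      simp only [mem_filter, mem_univ, true_and, mem_map, Fin.castLEEmb_apply]
      exact ⟨fun h => ⟨⟨a, h⟩, rfl⟩, by rintro ⟨b, rfl⟩; exact b.isLt⟩
    rw [hfilter, sum_map]
    rfl
  · refine (sum_subset (fun a => by simp only [mem_filter, mem_univ, true_and]; omega)
      fun a ha ha' => ?_).symm
    simp only [mem_filter, mem_univ, true_and, not_lt, not_le] at ha ha'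
    exact hf a ha ha'

theorem sum_sq_sum_sub_le {ι : Type*} [Fintype ι] [DecidableEq ι] (v : ι → ℝ) :
    ∑ i, (∑ j, v j - v i) ^ 2 ≤ ((Fintype.card ι : ℝ) - 1) ^ 2 * ∑ i, v i ^ 2 := by
  have key (i : ι) :
      (∑ j, v j - v i) ^ 2 ≤ ((Fintype.card ι : ℝ) - 1) * (∑ j, v j ^ 2 - v i ^ 2) := by
    have hcs := sq_sum_le_card_mul_sum_sq (s := univ.erase i) (f := v)
    rwa [sum_erase_eq_sub (mem_univ i), sum_erase_eq_sub (mem_univ i),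
      card_erase_of_mem (mem_univ i), card_univ,
      Nat.cast_pred (Fintype.card_pos_iff.mpr ⟨i⟩)] at hcs
  calc ∑ i, (∑ j, v j - v i) ^ 2
      ≤ ∑ i, ((Fintype.card ι : ℝ) - 1) * (∑ j, v j ^ 2 - v i ^ 2) :=
        sum_le_sum fun i _ => key i
    _ = ((Fintype.card ι : ℝ) - 1) ^ 2 * ∑ i, v i ^ 2 := by
      rw [← mul_sum, sum_sub_distrib, sum_const, card_univ, nsmul_eq_mul]
      ring

namespace Matrix

variable {m n : Type*} [Fintype m] [Fintype n]

theorem fromBlocks_zero_mulVec_eq_smul_iff (N : Matrix m n ℝ) {μ : ℝ} {u : m → ℝ}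
    {v : n → ℝ} :
    fromBlocks 0 N Nᵀ 0 *ᵥ Sum.elim u v = μ • Sum.elim u v ↔
      N *ᵥ v = μ • u ∧ Nᵀ *ᵥ u = μ • v := by
  rw [fromBlocks_mulVec, ← Sum.elim_comp_inl_inr (μ • Sum.elim u v), Sum.elim_eq_iff]
  simp only [zero_mulVec, zero_add, add_zero, Function.comp_def, Sum.elim_inl, Sum.elim_inr,
    Pi.smul_apply]
  rfl

variable {N : Matrix m n ℝ} {T : ℝ}

/-- `w` is isotropic for the positive semidefinite matrix `T • 1 - Nᵀ * N`, hence in its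
kernel. -/
theorem transpose_mulVec_mulVec_eq_smul_of_le_of_eq [DecidableEq n]
    (hle : ∀ v, N *ᵥ v ⬝ᵥ N *ᵥ v ≤ T * (v ⬝ᵥ v)) {w : n → ℝ}
    (hw : N *ᵥ w ⬝ᵥ N *ᵥ w = T * (w ⬝ᵥ w)) : Nᵀ *ᵥ (N *ᵥ w) = T • w := by
  have quad (v : n → ℝ) :
      star v ⬝ᵥ (T • 1 - Nᵀ * N) *ᵥ v = T * (v ⬝ᵥ v) - N *ᵥ v ⬝ᵥ N *ᵥ v := by
    rw [star_trivial, sub_mulVec, smul_mulVec, one_mulVec, ← mulVec_mulVec, dotProduct_sub,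
      dotProduct_smul, dotProduct_transpose_mulVec, smul_eq_mul]
  have hpsd : (T • 1 - Nᵀ * N).PosSemidef := by
    refine posSemidef_iff_dotProduct_mulVec.mpr ⟨?_, fun v => ?_⟩
    · simp [IsHermitian, transpose_sub]
    · rw [quad]; linarith [hle v]
  have hker := (hpsd.dotProduct_mulVec_zero_iff w).mp (by rw [quad, hw, sub_self])
  rw [sub_mulVec, smul_mulVec, one_mulVec, ← mulVec_mulVec, sub_eq_zero] at hker
  exact hker.symm

theorem neg_sqrt_le_of_fromBlocks_mulVec_eq_smul
    (hle : ∀ v, N *ᵥ v ⬝ᵥ N *ᵥ v ≤ T * (v ⬝ᵥ v)) {μ : ℝ} {x : m ⊕ n → ℝ} (hx : x ≠ 0)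
    (hμ : fromBlocks 0 N Nᵀ 0 *ᵥ x = μ • x) : -√T ≤ μ := by
  rcases le_or_gt 0 μ with hμ0 | hμ0
  · linarith [Real.sqrt_nonneg T]
  obtain ⟨u, v, rfl⟩ : ∃ u v, x = Sum.elim u v := ⟨_, _, (Sum.elim_comp_inl_inr x).symm⟩
  obtain ⟨hu, hv⟩ := (fromBlocks_zero_mulVec_eq_smul_iff N).mp hμ
  have huv : u ⬝ᵥ u = v ⬝ᵥ v := by
    have := dotProduct_transpose_mulVec N v u
    rw [hu, hv, dotProduct_smul, dotProduct_smul, smul_eq_mul, smul_eq_mul] at this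
    exact (mul_left_cancel₀ hμ0.ne this).symm
  have hu0 : u ≠ 0 := by
    rintro rfl
    have hv0 : v = 0 := dotProduct_self_eq_zero.mp (by rw [← huv, dotProduct_zero])
    exact hx (by rw [hv0, Sum.elim_zero_zero])
  have hsq : μ ^ 2 ≤ T := by
    have := hle v
    rw [hu, smul_dotProduct, dotProduct_smul, smul_eq_mul, smul_eq_mul, ← huv] at this
    have hpos : 0 < u ⬝ᵥ u := (dotProduct_star_self_pos_iff (v := u)).mpr hu0
    exact le_of_mul_le_mul_right (by linarith) hpos
  exact neg_le_of_abs_le (Real.abs_le_sqrt hsq)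

theorem exists_fromBlocks_mulVec_eq_neg_sqrt_smul {w : n → ℝ} (hw : w ≠ 0)
    (hNw : Nᵀ *ᵥ (N *ᵥ w) = T • w) :
    ∃ x : m ⊕ n → ℝ, x ≠ 0 ∧ fromBlocks 0 N Nᵀ 0 *ᵥ x = (-√T) • x := by
  have hTw : T * (w ⬝ᵥ w) = N *ᵥ w ⬝ᵥ N *ᵥ w := by
    rw [← dotProduct_transpose_mulVec, hNw, dotProduct_smul, smul_eq_mul]
  have hT : 0 ≤ T := nonneg_of_mul_nonneg_left (hTw ▸ dotProduct_star_self_nonneg (N *ᵥ w))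
    ((dotProduct_star_self_pos_iff (v := w)).mpr hw)
  rcases hT.eq_or_lt with rfl | hTpos
  · have hN : N *ᵥ w = 0 := by
      rw [← dotProduct_self_eq_zero, ← hTw, zero_mul]
    refine ⟨Sum.elim 0 w, fun h => hw ?_, ?_⟩
    · simpa using congr_arg (· ∘ Sum.inr) h
    · rw [Real.sqrt_zero, neg_zero, fromBlocks_zero_mulVec_eq_smul_iff]
      simp [hN]
  · refine ⟨Sum.elim (N *ᵥ w) ((-√T) • w), fun h => hw ?_, ?_⟩
    · simpa [(Real.sqrt_pos.mpr hTpos).ne'] using congr_arg (· ∘ Sum.inr) h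
    · rw [fromBlocks_zero_mulVec_eq_smul_iff, mulVec_smul, hNw, smul_smul,
        neg_mul_neg, Real.mul_self_sqrt hT]
      exact ⟨rfl, rfl⟩

theorem minEig_fromBlocks_zero_transpose [DecidableEq n]
    (hle : ∀ v, N *ᵥ v ⬝ᵥ N *ᵥ v ≤ T * (v ⬝ᵥ v)) {w : n → ℝ} (hw : w ≠ 0)
    (hwT : N *ᵥ w ⬝ᵥ N *ᵥ w = T * (w ⬝ᵥ w)) : minEig (fromBlocks 0 N Nᵀ 0) = -√T :=
  IsLeast.csInf_eq ⟨exists_fromBlocks_mulVec_eq_neg_sqrt_smul hw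
      (transpose_mulVec_mulVec_eq_smul_of_le_of_eq hle hwT),
    fun _ ⟨_, hx, hμ⟩ => neg_sqrt_le_of_fromBlocks_mulVec_eq_smul hle hx hμ⟩

end Matrix

namespace B2

variable {n1 n2 κ : ℕ}

def complBiadj (n1 n2 κ : ℕ) : Matrix (Fin n1) (Fin n2) ℝ :=
  of fun a b => if ((a : ℕ) < n2 ∧ (a : ℕ) ≠ b) ∨ κ ≤ (a : ℕ) then 1 else 0

theorem adjMat_compl (h : n2 ≤ κ) :
    adjMat (B2 n1 n2 κ)ᶜ = fromBlocks 0 (complBiadj n1 n2 κ) (complBiadj n1 n2 κ)ᵀ 0 := by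
  ext (a | a) (b | b)
  · simp [adjMat, B2]
  · simp only [adjMat, complBiadj, B2, SimpleGraph.compl_adj, of_apply, fromBlocks_apply₁₂,
      ne_eq, reduceCtorEq, not_false_eq_true, true_and, Sum.elim_inl, Sum.elim_inr]
    exact if_congr (by omega) rfl rfl
  · simp only [adjMat, complBiadj, B2, SimpleGraph.compl_adj, of_apply, fromBlocks_apply₂₁,
      transpose_apply, ne_eq, reduceCtorEq, not_false_eq_true, true_and, Sum.elim_inl,
      Sum.elim_inr]
    exact if_congr (by omega) rfl rfl
  · simp [adjMat, B2]

theorem complBiadj_mulVec_castLE (hn : n2 ≤ n1) (hκ : n2 ≤ κ) (v : Fin n2 → ℝ) (b : Fin n2) :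
    (complBiadj n1 n2 κ *ᵥ v) (b.castLE hn) = ∑ c, v c - v b := by
  rw [← sum_erase_eq_sub (f := v) (mem_univ b), ← filter_ne', sum_filter, mulVec, dotProduct]
  refine sum_congr rfl fun c _ => ?_
  simp only [complBiadj, of_apply, Fin.val_castLE, ite_mul, one_mul, zero_mul]
  exact if_congr (by simp only [Fin.is_lt, ne_eq, true_and, Fin.ext_iff]; omega) rfl rfl

theorem complBiadj_mulVec_of_le {a : Fin n1} (ha : κ ≤ (a : ℕ)) (v : Fin n2 → ℝ) :
    (complBiadj n1 n2 κ *ᵥ v) a = ∑ c, v c := by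
  simp [mulVec, dotProduct, complBiadj, ha]

theorem complBiadj_mulVec_of_le_of_lt {a : Fin n1} (h₁ : n2 ≤ (a : ℕ)) (h₂ : (a : ℕ) < κ)
    (v : Fin n2 → ℝ) : (complBiadj n1 n2 κ *ᵥ v) a = 0 := by
  simp [mulVec, dotProduct, complBiadj, h₂, not_lt.mpr h₁]

theorem complBiadj_mulVec_dotProduct_self (h1 : κ ≤ n1) (hκ : n2 ≤ κ) (v : Fin n2 → ℝ) :
    complBiadj n1 n2 κ *ᵥ v ⬝ᵥ complBiadj n1 n2 κ *ᵥ v =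
      ∑ b, (∑ c, v c - v b) ^ 2 + ((n1 : ℝ) - κ) * (∑ c, v c) ^ 2 := by
  rw [dotProduct, Fin.sum_eq_sum_castLE_add_sum_filter_le (hκ.trans h1) hκ _
    fun a h₁ h₂ => by rw [complBiadj_mulVec_of_le_of_lt h₁ h₂, mul_zero]]
  congr 1
  · simp only [complBiadj_mulVec_castLE _ hκ, sq]
  · rw [sum_congr rfl fun a ha => by rw [complBiadj_mulVec_of_le (mem_filter.mp ha).2],
      sum_const, Fin.card_filter_le_val h1, nsmul_eq_mul, Nat.cast_sub h1, sq]

theorem complBiadj_mulVec_dotProduct_self_le (h1 : κ ≤ n1) (hκ : n2 ≤ κ) (v : Fin n2 → ℝ) :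
    complBiadj n1 n2 κ *ᵥ v ⬝ᵥ complBiadj n1 n2 κ *ᵥ v ≤
      (((n2 : ℝ) - 1) ^ 2 + ((n1 : ℝ) - κ) * n2) * (v ⬝ᵥ v) := by
  have hdiff := sum_sq_sum_sub_le v
  have hsum := sq_sum_le_card_mul_sum_sq (s := univ) (f := v)
  have hκn : (0 : ℝ) ≤ n1 - κ := sub_nonneg.mpr (by exact_mod_cast h1)
  simp only [card_univ, Fintype.card_fin] at hdiff hsum
  rw [complBiadj_mulVec_dotProduct_self h1 hκ, dotProduct]
  simp only [← sq]
  nlinarith [mul_le_mul_of_nonneg_left hsum hκn]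

theorem complBiadj_mulVec_one_dotProduct_self (h1 : κ ≤ n1) (hκ : n2 ≤ κ) :
    complBiadj n1 n2 κ *ᵥ 1 ⬝ᵥ complBiadj n1 n2 κ *ᵥ 1 =
      (((n2 : ℝ) - 1) ^ 2 + ((n1 : ℝ) - κ) * n2) * ((1 : Fin n2 → ℝ) ⬝ᵥ 1) := by
  rw [complBiadj_mulVec_dotProduct_self h1 hκ]
  simp only [Pi.one_apply, sum_const, card_univ, Fintype.card_fin, nsmul_eq_mul, mul_one,
    one_dotProduct_one]
  ring

end B2

/-- For `n1 ≥ κ > n2 ≥ 1`, the least eigenvalue of the complement of `B2(n1, n2; κ)`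
equals `−√((n2−1)² + (n1−κ)·n2)`. -/
theorem minEig_compl_B2 (n1 n2 κ : ℕ) (h1 : κ ≤ n1) (h2 : n2 < κ) (h3 : 1 ≤ n2) :
    minEig (adjMat ((B2 n1 n2 κ)ᶜ)) =
      - Real.sqrt (((n2 : ℝ) - 1) ^ 2 + ((n1 : ℝ) - (κ : ℝ)) * (n2 : ℝ)) := by
  rw [B2.adjMat_compl h2.le]
  exact minEig_fromBlocks_zero_transpose (B2.complBiadj_mulVec_dotProduct_self_le h1 h2.le)
    (Function.ne_iff.mpr ⟨⟨0, h3⟩, one_ne_zero⟩)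
    (B2.complBiadj_mulVec_one_dotProduct_self h1 h2.le)
end
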